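/- arXiv:1005.0488 — 4 statements merged into one kernel-verified Lean document; each statement's English description precedes it below -/
import Mathlib

section
/- Let n ≥ 1 and m ≥ n be integers, let U = {u_1,…,u_n}, V = {v_1,…,v_n}, W = {w_1,…,w_n} be three pairwise disjoint sets, let T = {T_1,…,T_m} be a collection of m triples in U × V × W, and let G' and S = {û, v̂, ŵ, t̂} be constructed from this instance as follows: V(G') = {û, v̂, ŵ, t̂} ∪ {u_i} ∪ {v_i} ∪ {w_i} ∪ {t_i : 1 ≤ i ≤ m} ∪ {a_j : 1 ≤ j ≤ m−n}, with edges û u_i, v̂ v_i, ŵ w_i (1 ≤ i ≤ n); t̂ t_i (1 ≤ i ≤ m); û a_j, v̂ a_j, ŵ a_j (1 ≤ j ≤ m−n); t_i a_j (all i, j); and t_i u_j, t_i v_j, t_i w_j whenever u_j, v_j, w_j respectively belong to T_i. If there is a subset M of T with |M| = n whose triples pairwise differ in every coordinate, then G' contains m internally disjoint trees connecting S; specifically, for every T_i ∈ M the subgraph induced on S ∪ {t_i} and the three vertices of T_i contains a tree connecting S, and for every T_i ∉ M some induced subgraph on {t_i, a_j, û, v̂, ŵ, t̂} contains a tree connecting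 S, and these m trees form an internally disjoint set of trees connecting S. -/
open SimpleGraph

/-- `F` is an internally disjoint family of trees connecting `S` in `G`:
each member is a subgraph of `G` that is a tree containing all of `S`, the members are
pairwise edge-disjoint, and any two distinct members intersect exactly in `S`. -/
def IsIDTrees {V : Type*} (G : SimpleGraph V) (S : Set V) {ι : Type*} (F : ι → G.Subgraph) : Prop :=
  (∀ i, S ⊆ (F i).verts ∧ ((F i).coe).IsTree) ∧
    ∀ i j, i ≠ j → (F i).verts ∩ (F j).verts = S ∧ Disjoint (F i).edgeSet (F j).edgeSet

/-- Vertices of the graph `G'` built from a 3-dimensional-matching instance with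
`|U| = |V| = |W| = n` and `m` triples. -/
inductive DMVert (n m : ℕ) where
  | uhat | vhat | what | that
  | u (i : Fin n) | v (i : Fin n) | w (i : Fin n)
  | t (i : Fin m) | a (j : Fin (m - n))

/-- The base (asymmetric) adjacency relation of `G'`; a triple `T i` is recorded by the indices
of its three coordinates in `U`, `V` and `W`. -/
def dmRel {n m : ℕ} (T : Fin m → Fin n × Fin n × Fin n) :
    DMVert n m → DMVert n m → Prop
  | .uhat, .u _ => True
  | .vhat, .v _ => True
  | .what, .w _ => True
  | .that, .t _ => True
  | .uhat, .a _ => True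
  | .vhat, .a _ => True
  | .what, .a _ => True
  | .t _, .a _ => True
  | .t i, .u j => (T i).1 = j
  | .t i, .v j => (T i).2.1 = j
  | .t i, .w j => (T i).2.2 = j
  | _, _ => False

/-- The graph `G'` of the 3-DM reduction. -/
def dmGraph {n m : ℕ} (T : Fin m → Fin n × Fin n × Fin n) : SimpleGraph (DMVert n m) :=
  SimpleGraph.fromRel (dmRel T)

/-- The set `S = {û, v̂, ŵ, t̂}`. -/
def dmS (n m : ℕ) : Set (DMVert n m) :=
  {DMVert.uhat, DMVert.vhat, DMVert.what, DMVert.that}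

/-!
For a triple `T i` of the matching take the tree `t̂ – tᵢ – {u, v, w} – {û, v̂, ŵ}` through the
three vertices of `T i`; give each of the `m - n` remaining triples its own `aⱼ` and take the tree
`t̂ – tᵢ – aⱼ – {û, v̂, ŵ}`. Each is grown from one vertex by attaching pendant edges, so it is a
tree. As the triples of the matching are pairwise disjoint, the trees meet only in `S`, and
since `S` is independent in `G'`, two trees meeting only in `S` share no edge.
-/

namespace SimpleGraph

variable {V : Type*} {G : SimpleGraph V}

theorem IsIndepSet.disjoint_edgeSet {S : Set V} (hS : G.IsIndepSet S) {H₁ H₂ : G.Subgraph}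
    (h : H₁.verts ∩ H₂.verts ⊆ S) : Disjoint H₁.edgeSet H₂.edgeSet := by
  rw [Set.disjoint_left]
  intro e
  induction e using Sym2.ind with
  | h x y =>
    intro h₁ h₂
    have hx : x ∈ S := h ⟨H₁.edge_vert h₁, H₂.edge_vert h₂⟩
    have hy : y ∈ S := h ⟨H₁.edge_vert h₁.symm, H₂.edge_vert h₂.symm⟩
    exact hS hx hy (H₁.adj_sub h₁).ne (H₁.adj_sub h₁)

namespace Subgraph

variable {H : G.Subgraph} {x y : V}

/-- Stated through `spanningCoe` so that attaching an edge keeps the vertex type fixed. -/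
def IsTree (H : G.Subgraph) : Prop := H.Connected ∧ H.spanningCoe.IsAcyclic

theorem IsTree.coe (hH : H.IsTree) : H.coe.IsTree :=
  ⟨hH.1.coe, hH.2.embedding H.coeEmbeddingSpanningCoe⟩

theorem isTree_singletonSubgraph (v : V) : (G.singletonSubgraph v).IsTree :=
  ⟨singletonSubgraph_connected, isAcyclic_bot⟩

theorem not_reachable_spanningCoe_of_notMem (hy : y ∉ H.verts) (hxy : x ≠ y) :
    ¬H.spanningCoe.Reachable x y := by
  rintro ⟨p⟩
  have hp : ¬p.Nil := Walk.not_nil_of_ne hxy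
  exact hy (H.edge_vert (p.adj_penultimate hp).symm)

theorem IsTree.sup_subgraphOfAdj (hH : H.IsTree) (hxy : G.Adj x y) (hx : x ∈ H.verts)
    (hy : y ∉ H.verts) : (H ⊔ G.subgraphOfAdj hxy).IsTree := by
  refine ⟨connected_sup hH.1.preconnected (subgraphOfAdj_connected hxy).preconnected
    ⟨x, hx, by simp⟩, ?_⟩
  rw [sup_spanningCoe, spanningCoe_subgraphOfAdj]
  exact hH.2.sup_edge_of_not_reachable (not_reachable_spanningCoe_of_notMem hy hxy.ne)

end Subgraph

end SimpleGraph

theorem isIDTrees_of_verts_eq_union {V ι : Type*} {G : SimpleGraph V} {S : Set V}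
    {F : ι → G.Subgraph} (X : ι → Set V) (hS : G.IsIndepSet S) (htree : ∀ i, (F i).coe.IsTree)
    (hverts : ∀ i, (F i).verts = S ∪ X i) (hX : Pairwise fun i j => Disjoint (X i) (X j)) :
    IsIDTrees G S F := by
  refine ⟨fun i => ⟨hverts i ▸ Set.subset_union_left, htree i⟩, fun i j hij => ?_⟩
  have hinter : (F i).verts ∩ (F j).verts = S := by
    rw [hverts, hverts, ← Set.union_inter_distrib_left, (hX hij).inter_eq, Set.union_empty]
  exact ⟨hinter, hS.disjoint_edgeSet hinter.le⟩

namespace DMVert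

open Subgraph

variable {n m : ℕ} {T : Fin m → Fin n × Fin n × Fin n}

theorem dmGraph_adj {x y : DMVert n m} :
    (dmGraph T).Adj x y ↔ x ≠ y ∧ (dmRel T x y ∨ dmRel T y x) :=
  fromRel_adj _ _ _

theorem dmS_isIndepSet : (dmGraph T).IsIndepSet (dmS n m) := by
  intro x hx y hy _
  simp only [dmS, Set.mem_insert_iff, Set.mem_singleton_iff] at hx hy
  rcases hx with rfl | rfl | rfl | rfl <;> rcases hy with rfl | rfl | rfl | rfl <;>
    simp [dmGraph_adj, dmRel]

variable (T)

def matchedTree (i : Fin m) : (dmGraph T).Subgraph :=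
  (dmGraph T).singletonSubgraph (t i)
    ⊔ (dmGraph T).subgraphOfAdj (v := t i) (w := that) (by simp [dmGraph_adj, dmRel])
    ⊔ (dmGraph T).subgraphOfAdj (v := t i) (w := u (T i).1) (by simp [dmGraph_adj, dmRel])
    ⊔ (dmGraph T).subgraphOfAdj (v := t i) (w := v (T i).2.1) (by simp [dmGraph_adj, dmRel])
    ⊔ (dmGraph T).subgraphOfAdj (v := t i) (w := w (T i).2.2) (by simp [dmGraph_adj, dmRel])
    ⊔ (dmGraph T).subgraphOfAdj (v := u (T i).1) (w := uhat) (by simp [dmGraph_adj, dmRel])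
    ⊔ (dmGraph T).subgraphOfAdj (v := v (T i).2.1) (w := vhat) (by simp [dmGraph_adj, dmRel])
    ⊔ (dmGraph T).subgraphOfAdj (v := w (T i).2.2) (w := what) (by simp [dmGraph_adj, dmRel])

def unmatchedTree (i : Fin m) (j : Fin (m - n)) : (dmGraph T).Subgraph :=
  (dmGraph T).singletonSubgraph (a j)
    ⊔ (dmGraph T).subgraphOfAdj (v := a j) (w := uhat) (by simp [dmGraph_adj, dmRel])
    ⊔ (dmGraph T).subgraphOfAdj (v := a j) (w := vhat) (by simp [dmGraph_adj, dmRel])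
    ⊔ (dmGraph T).subgraphOfAdj (v := a j) (w := what) (by simp [dmGraph_adj, dmRel])
    ⊔ (dmGraph T).subgraphOfAdj (v := a j) (w := t i) (by simp [dmGraph_adj, dmRel])
    ⊔ (dmGraph T).subgraphOfAdj (v := t i) (w := that) (by simp [dmGraph_adj, dmRel])

theorem isTree_matchedTree (i : Fin m) : (matchedTree T i).coe.IsTree := by
  refine IsTree.coe ?_
  repeat' first
    | exact isTree_singletonSubgraph _
    | apply IsTree.sup_subgraphOfAdj
  all_goals simp

theorem isTree_unmatchedTree (i : Fin m) (j : Fin (m - n)) :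
    (unmatchedTree T i j).coe.IsTree := by
  refine IsTree.coe ?_
  repeat' first
    | exact isTree_singletonSubgraph _
    | apply IsTree.sup_subgraphOfAdj
  all_goals simp

theorem verts_matchedTree (i : Fin m) :
    (matchedTree T i).verts = dmS n m ∪ {t i, u (T i).1, v (T i).2.1, w (T i).2.2} := by
  ext x
  simp only [matchedTree, dmS, verts_sup, singletonSubgraph_verts, subgraphOfAdj_verts,
    Set.mem_union, Set.mem_insert_iff, Set.mem_singleton_iff]
  tauto

theorem verts_unmatchedTree (i : Fin m) (j : Fin (m - n)) :
    (unmatchedTree T i j).verts = dmS n m ∪ {t i, a j} := by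
  ext x
  simp only [unmatchedTree, dmS, verts_sup, singletonSubgraph_verts, subgraphOfAdj_verts,
    Set.mem_union, Set.mem_insert_iff, Set.mem_singleton_iff]
  tauto

end DMVert

open DMVert in
theorem dm_reduction_of_matching_general (n m : ℕ)
    (T : Fin m → Fin n × Fin n × Fin n)
    (M : Finset (Fin m)) (hMcard : M.card = n)
    (hM : ∀ i ∈ M, ∀ j ∈ M, i ≠ j →
      (T i).1 ≠ (T j).1 ∧ (T i).2.1 ≠ (T j).2.1 ∧ (T i).2.2 ≠ (T j).2.2) :
    ∃ F : Fin m → (dmGraph T).Subgraph, IsIDTrees (dmGraph T) (dmS n m) F ∧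
      (∀ i ∈ M, (F i).verts ⊆ dmS n m ∪
        {DMVert.t i, DMVert.u (T i).1, DMVert.v (T i).2.1, DMVert.w (T i).2.2}) ∧
      (∀ i ∉ M, ∃ j : Fin (m - n), (F i).verts ⊆ dmS n m ∪ {DMVert.t i, DMVert.a j}) := by
  classical
  have slots : Mᶜ.card = m - n := by rw [Finset.card_compl, hMcard, Fintype.card_fin]
  let slot (i : Fin m) (hi : i ∉ M) : Fin (m - n) :=
    Finset.equivFinOfCardEq slots ⟨i, Finset.mem_compl.2 hi⟩
  let F (i : Fin m) := if hi : i ∈ M then matchedTree T i else unmatchedTree T i (slot i hi)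
  let X (i : Fin m) : Set (DMVert n m) :=
    if hi : i ∈ M then {t i, u (T i).1, v (T i).2.1, w (T i).2.2} else {t i, a (slot i hi)}
  have hverts (i : Fin m) : (F i).verts = dmS n m ∪ X i := by
    by_cases hi : i ∈ M <;> simp [F, X, hi, verts_matchedTree, verts_unmatchedTree]
  have hX : Pairwise fun i j => Disjoint (X i) (X j) := by
    intro i j hij
    have hslot : ∀ hi hj, slot j hj ≠ slot i hi := fun _ _ h =>
      hij (Subtype.ext_iff.1 ((Finset.equivFinOfCardEq slots).injective h)).symm
    by_cases hi : i ∈ M <;> by_cases hj : j ∈ M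
    · obtain ⟨h₁, h₂, h₃⟩ := hM i hi j hj hij
      simp [X, hi, hj, hij.symm, h₁.symm, h₂.symm, h₃.symm]
    all_goals simp [X, hi, hj, hij.symm, hslot]
  refine ⟨F, isIDTrees_of_verts_eq_union X dmS_isIndepSet (fun i => ?_) hverts hX,
    fun i hi => ?_, fun i hi => ⟨slot i hi, ?_⟩⟩
  · by_cases hi : i ∈ M
    · rw [show F i = _ from dif_pos hi]
      exact isTree_matchedTree T i
    · rw [show F i = _ from dif_neg hi]
      exact isTree_unmatchedTree T i _
  · simp [F, hi, verts_matchedTree]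
  · simp [F, hi, verts_unmatchedTree]

/-- If the 3-DM instance has a perfect matching `M`, then `G'` contains `m` internally
disjoint trees connecting `S`; moreover for `i ∈ M` the `i`-th tree lives inside
`S ∪ {t_i}` together with the three vertices of the triple `T i`, and for `i ∉ M`
the `i`-th tree lives inside `S ∪ {t_i, a_j}` for some `j`. -/
theorem dm_reduction_of_matching (n m : ℕ) (hn : 1 ≤ n) (hmn : n ≤ m)
    (T : Fin m → Fin n × Fin n × Fin n)
    (M : Finset (Fin m)) (hMcard : M.card = n)
    (hM : ∀ i ∈ M, ∀ j ∈ M, i ≠ j →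
      (T i).1 ≠ (T j).1 ∧ (T i).2.1 ≠ (T j).2.1 ∧ (T i).2.2 ≠ (T j).2.2) :
    ∃ F : Fin m → (dmGraph T).Subgraph, IsIDTrees (dmGraph T) (dmS n m) F ∧
      (∀ i ∈ M, (F i).verts ⊆ dmS n m ∪
        {DMVert.t i, DMVert.u (T i).1, DMVert.v (T i).2.1, DMVert.w (T i).2.2}) ∧
      (∀ i ∉ M, ∃ j : Fin (m - n), (F i).verts ⊆ dmS n m ∪ {DMVert.t i, DMVert.a j}) :=
  dm_reduction_of_matching_general n m T M hMcard hM
end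

section
/- Let n ≥ 1 and m ≥ n be integers, let U = {u_1,…,u_n}, V = {v_1,…,v_n}, W = {w_1,…,w_n} be three pairwise disjoint sets, let T = {T_1,…,T_m} be a collection of m triples in U × V × W, and let G' and S = {û, v̂, ŵ, t̂} be constructed from this instance as follows: V(G') = {û, v̂, ŵ, t̂} ∪ {u_i} ∪ {v_i} ∪ {w_i} ∪ {t_i : 1 ≤ i ≤ m} ∪ {a_j : 1 ≤ j ≤ m−n}, with edges û u_i, v̂ v_i, ŵ w_i (1 ≤ i ≤ n); t̂ t_i (1 ≤ i ≤ m); û a_j, v̂ a_j, ŵ a_j (1 ≤ j ≤ m−n); t_i a_j (all i, j); and t_i u_j, t_i v_j, t_i w_j whenever u_j, v_j, w_j respectively belong to T_i. If G' contains m internally disjoint trees connecting S, then there is a subset M of T with |M| = n such that whenever (u,v,w) and (u',v',w') are distinct triples in M, u ≠ u', v ≠ v' and w ≠ w'. -/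
open SimpleGraph

/-! Every tree contains a neighbour of `t̂`, which is some `t l`, and a neighbour of each of
`û, v̂, ŵ`, which is a vertex of that side or some `a j`. These vertices lie outside `S`, so each
belongs to at most one tree, and since there are exactly `m` of each kind, every tree contains
exactly one `t`-vertex and exactly one neighbour of each hat. The `n` trees whose `û`-neighbour
is some `u i` contain no `a j`, so their neighbours of `v̂` and `ŵ` are leaves as well, and the
path from each hat to `t̂` runs through its leaf to the tree's `t l`. Hence the triples of these
`n` trees agree with their leaves, which are distinct across trees. -/

theorem SimpleGraph.Subgraph.exists_adj_and_eq_or_exists_adj_ne {V : Type*} {G : SimpleGraph V}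
    {H : G.Subgraph} (hH : H.coe.Preconnected) {a b : V} (ha : a ∈ H.verts) (hb : b ∈ H.verts)
    (hab : a ≠ b) : ∃ x, H.Adj a x ∧ (x = b ∨ ∃ y, y ≠ a ∧ H.Adj x y) := by
  classical
  obtain ⟨p, hp⟩ := (hH ⟨a, ha⟩ ⟨b, hb⟩).some.toPath
  match p, hp with
  | .nil, _ => exact absurd rfl hab
  | .cons (v := x) hax .nil, _ => exact ⟨x, hax, Or.inl rfl⟩
  | .cons (v := x) hax (.cons (v := y) hxy _), hp =>
    refine ⟨x, hax, Or.inr ⟨y, fun hya => ?_, hxy⟩⟩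
    have hy : y = ⟨a, ha⟩ := Subtype.ext hya
    subst hy
    simp at hp

namespace IsIDTrees

variable {V ι : Type*} {G : SimpleGraph V} {S : Set V} {F : ι → G.Subgraph}

theorem eq_of_mem_verts (hF : IsIDTrees G S F) {x : V} (hx : x ∉ S) {i j : ι}
    (hi : x ∈ (F i).verts) (hj : x ∈ (F j).verts) : i = j := by
  by_contra hij
  exact hx ((hF.2 i j hij).1 ▸ ⟨hi, hj⟩)

theorem exists_equiv_mem_verts_iff [Fintype ι] {α : Type*} [Fintype α] (hF : IsIDTrees G S F)
    (ψ : α → V) (hψ : ∀ s, ψ s ∉ S) (hcard : Fintype.card α ≤ Fintype.card ι)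
    (hex : ∀ k, ∃ s, ψ s ∈ (F k).verts) :
    ∃ e : ι ≃ α, ∀ k s, ψ s ∈ (F k).verts ↔ s = e k := by
  choose ρ hρ using hex
  have hinj : ρ.Injective := fun i j hij =>
    hF.eq_of_mem_verts (hψ _) (hρ i) (hij ▸ hρ j)
  have hbij : ρ.Bijective := (Fintype.bijective_iff_injective_and_card ρ).2
    ⟨hinj, le_antisymm (Fintype.card_le_of_injective ρ hinj) hcard⟩
  refine ⟨.ofBijective ρ hbij, fun k s => ⟨fun hs => ?_, fun hs => hs ▸ hρ k⟩⟩
  obtain ⟨k', rfl⟩ := hbij.2 s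
  rw [hF.eq_of_mem_verts (hψ _) (hρ k') hs]
  rfl

theorem exists_adj_and_eq_or_exists_adj_ne (hF : IsIDTrees G S F) (k : ι) {a b : V}
    (ha : a ∈ S) (hb : b ∈ S) (hab : a ≠ b) :
    ∃ x, (F k).Adj a x ∧ (x = b ∨ ∃ y, y ≠ a ∧ (F k).Adj x y) :=
  Subgraph.exists_adj_and_eq_or_exists_adj_ne (hF.1 k).2.connected.preconnected
    ((hF.1 k).1 ha) ((hF.1 k).1 hb) hab

end IsIDTrees

/-- The three sides `U`, `V`, `W`, on which the construction is symmetric. -/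
inductive DMSide
  | u | v | w

namespace DMSide

variable {n m : ℕ}

def hat : DMSide → DMVert n m
  | u => .uhat
  | v => .vhat
  | w => .what

def leaf : DMSide → Fin n → DMVert n m
  | u => .u
  | v => .v
  | w => .w

def coord : DMSide → Fin n × Fin n × Fin n → Fin n
  | u => fun p => p.1
  | v => fun p => p.2.1
  | w => fun p => p.2.2

def hatNbr (c : DMSide) : Fin n ⊕ Fin (m - n) → DMVert n m :=
  Sum.elim c.leaf .a

theorem hat_mem_dmS (c : DMSide) : (c.hat : DMVert n m) ∈ dmS n m := by
  cases c <;> simp [hat, dmS]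

theorem hatNbr_notMem_dmS (c : DMSide) (s : Fin n ⊕ Fin (m - n)) : c.hatNbr s ∉ dmS n m := by
  cases c <;> cases s <;> simp [hatNbr, leaf, dmS]

theorem hat_ne_that (c : DMSide) : (c.hat : DMVert n m) ≠ .that := by
  cases c <;> simp [hat]

theorem leaf_ne_that (c : DMSide) (i : Fin n) : (c.leaf i : DMVert n m) ≠ .that := by
  cases c <;> simp [leaf]

end DMSide

section dmGraph

open DMSide

variable {n m : ℕ} {T : Fin m → Fin n × Fin n × Fin n}

theorem t_notMem_dmS (l : Fin m) : (DMVert.t l : DMVert n m) ∉ dmS n m := by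
  simp [dmS]

theorem dmGraph_adj_that (x : DMVert n m) : (dmGraph T).Adj .that x ↔ ∃ l, x = .t l := by
  cases x <;> simp [dmGraph, dmRel]

theorem dmGraph_adj_hat (c : DMSide) (x : DMVert n m) :
    (dmGraph T).Adj c.hat x ↔ ∃ s, x = c.hatNbr s := by
  cases c <;> cases x <;> simp [dmGraph, dmRel, hat, hatNbr, leaf]

theorem dmGraph_adj_leaf (c : DMSide) (i : Fin n) (x : DMVert n m) :
    (dmGraph T).Adj (c.leaf i) x ↔ x = c.hat ∨ ∃ l, x = .t l ∧ c.coord (T l) = i := by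
  cases c <;> cases x <;> simp [dmGraph, dmRel, hat, leaf, coord, eq_comm]

end dmGraph

section trees

open DMSide

variable {n m : ℕ} {T : Fin m → Fin n × Fin n × Fin n} {F : Fin m → (dmGraph T).Subgraph}

theorem dm_exists_equiv_t_mem_iff (hF : IsIDTrees (dmGraph T) (dmS n m) F) :
    ∃ σ : Fin m ≃ Fin m, ∀ k l, DMVert.t l ∈ (F k).verts ↔ l = σ k := by
  refine hF.exists_equiv_mem_verts_iff _ t_notMem_dmS le_rfl fun k => ?_
  obtain ⟨x, hx, -⟩ := hF.exists_adj_and_eq_or_exists_adj_ne k (a := .that) (b := .uhat)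
    (by simp [dmS]) (by simp [dmS]) nofun
  obtain ⟨l, rfl⟩ := (dmGraph_adj_that x).1 hx.adj_sub
  exact ⟨l, hx.snd_mem⟩

theorem dm_exists_equiv_hatNbr_mem_iff (hmn : n ≤ m) (hF : IsIDTrees (dmGraph T) (dmS n m) F)
    (c : DMSide) :
    ∃ ρ : Fin m ≃ Fin n ⊕ Fin (m - n), ∀ k s, c.hatNbr s ∈ (F k).verts ↔ s = ρ k := by
  refine hF.exists_equiv_mem_verts_iff _ (hatNbr_notMem_dmS c) (by simp; omega) fun k => ?_
  obtain ⟨x, hx, -⟩ :=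
    hF.exists_adj_and_eq_or_exists_adj_ne k (hat_mem_dmS c) (by simp [dmS]) (hat_ne_that c)
  obtain ⟨s, rfl⟩ := (dmGraph_adj_hat c x).1 hx.adj_sub
  exact ⟨s, hx.snd_mem⟩

/-- The path from `c.hat` to `t̂` in tree `k` passes first through the unique neighbour
`c.leaf i` of `c.hat` in that tree and then through the tree's unique `t`-vertex. -/
theorem dm_coord_eq_of_hatNbr_eq_inl (hF : IsIDTrees (dmGraph T) (dmS n m) F)
    {σ : Fin m ≃ Fin m} (hσ : ∀ k l, DMVert.t l ∈ (F k).verts ↔ l = σ k) {c : DMSide}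
    {ρ : Fin m ≃ Fin n ⊕ Fin (m - n)} (hρ : ∀ k s, c.hatNbr s ∈ (F k).verts ↔ s = ρ k)
    {k : Fin m} {i : Fin n} (hk : ρ k = .inl i) : c.coord (T (σ k)) = i := by
  obtain ⟨x, hx, hxy⟩ :=
    hF.exists_adj_and_eq_or_exists_adj_ne k (hat_mem_dmS c) (by simp [dmS]) (hat_ne_that c)
  obtain ⟨s, rfl⟩ := (dmGraph_adj_hat c x).1 hx.adj_sub
  obtain rfl : s = .inl i := hk ▸ (hρ k s).1 hx.snd_mem
  obtain hxt | ⟨y, hy, hxy⟩ := hxy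
  · exact absurd hxt (leaf_ne_that c i)
  obtain rfl | ⟨l, rfl, hl⟩ := (dmGraph_adj_leaf c i y).1 hxy.adj_sub
  · exact absurd rfl hy
  · rwa [← (hσ k l).1 hxy.snd_mem]

theorem dm_eq_inr_of_eq_inr {ρ : DMSide → Fin m ≃ Fin n ⊕ Fin (m - n)}
    (hρ : ∀ c k s, c.hatNbr s ∈ (F k).verts ↔ s = ρ c k) {c d : DMSide} {k : Fin m}
    {j : Fin (m - n)} (hj : ρ c k = .inr j) : ρ d k = .inr j :=
  ((hρ d k (.inr j)).1 ((hρ c k (.inr j)).2 hj.symm)).symm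

theorem dm_coord_ne_of_hatNbr_eq_inl (hF : IsIDTrees (dmGraph T) (dmS n m) F)
    {σ : Fin m ≃ Fin m} (hσ : ∀ k l, DMVert.t l ∈ (F k).verts ↔ l = σ k)
    {ρ : DMSide → Fin m ≃ Fin n ⊕ Fin (m - n)}
    (hρ : ∀ c k s, c.hatNbr s ∈ (F k).verts ↔ s = ρ c k) {k k' : Fin m} {i i' : Fin n}
    (hk : ρ .u k = .inl i) (hk' : ρ .u k' = .inl i') (hne : k ≠ k') (c : DMSide) :
    c.coord (T (σ k)) ≠ c.coord (T (σ k')) := by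
  have hleaf : ∀ {k i}, ρ .u k = .inl i → ∃ g, ρ c k = .inl g := fun {k i} hk => by
    rcases h : ρ c k with g | j
    · exact ⟨g, rfl⟩
    · simp [dm_eq_inr_of_eq_inr hρ h] at hk
  obtain ⟨g, hg⟩ := hleaf hk
  obtain ⟨g', hg'⟩ := hleaf hk'
  rw [dm_coord_eq_of_hatNbr_eq_inl hF hσ (hρ c) hg,
    dm_coord_eq_of_hatNbr_eq_inl hF hσ (hρ c) hg']
  rintro rfl
  exact hne ((ρ c).injective (hg.trans hg'.symm))

end trees

theorem dm_matching_of_trees_general (n m : ℕ) (hmn : n ≤ m)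
    (T : Fin m → Fin n × Fin n × Fin n)
    (F : Fin m → (dmGraph T).Subgraph)
    (hF : IsIDTrees (dmGraph T) (dmS n m) F) :
    ∃ M : Finset (Fin m), M.card = n ∧
      ∀ i ∈ M, ∀ j ∈ M, i ≠ j →
        (T i).1 ≠ (T j).1 ∧ (T i).2.1 ≠ (T j).2.1 ∧ (T i).2.2 ≠ (T j).2.2 := by
  obtain ⟨σ, hσ⟩ := dm_exists_equiv_t_mem_iff hF
  choose ρ hρ using dm_exists_equiv_hatNbr_mem_iff hmn hF
  refine ⟨Finset.univ.map (Function.Embedding.inl.trans ((ρ .u).symm.trans σ).toEmbedding),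
    by simp, ?_⟩
  simp only [Finset.mem_map, Finset.mem_univ, true_and]
  rintro _ ⟨i, rfl⟩ _ ⟨i', rfl⟩ hne
  have hcoord := dm_coord_ne_of_hatNbr_eq_inl hF hσ hρ ((ρ .u).apply_symm_apply (.inl i))
    ((ρ .u).apply_symm_apply (.inl i')) (fun h => hne (by simp [h]))
  exact ⟨hcoord .u, hcoord .v, hcoord .w⟩

/-- If `G'` contains `m` internally disjoint trees connecting `S = {û, v̂, ŵ, t̂}`, then the
3-DM instance has a subset `M` of `n` triples that pairwise differ in every coordinate. -/
theorem dm_matching_of_trees (n m : ℕ) (hn : 1 ≤ n) (hmn : n ≤ m)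
    (T : Fin m → Fin n × Fin n × Fin n)
    (F : Fin m → (dmGraph T).Subgraph)
    (hF : IsIDTrees (dmGraph T) (dmS n m) F) :
    ∃ M : Finset (Fin m), M.card = n ∧
      ∀ i ∈ M, ∀ j ∈ M, i ≠ j →
        (T i).1 ≠ (T j).1 ∧ (T i).2.1 ≠ (T j).2.1 ∧ (T i).2.2 ≠ (T j).2.2 :=
  dm_matching_of_trees_general n m hmn T F hF
end

section
/- Let G be a graph, let S = {v_1, v_2, v_3, v_4} be a 4-subset of V(G), and let k_1 ≥ 5 and k_2 ≥ 2 be integers. Construct G' from G by adding k_1 − 4 new vertices â^1, …, â^{k_1−4} and, for each 1 ≤ i ≤ k_1 − 4, adding k_2 internally disjoint paths â^i a^i_j v_1 (1 ≤ j ≤ k_2) of length two through new, pairwise distinct vertices a^i_j, and let S' = S ∪ {â^1, …, â^{k_1−4}}. If G contains k_2 internally disjoint trees connecting S, then G' contains k_2 internally disjoint trees connecting S'. -/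
open SimpleGraph

/-- Vertices of the graph `G'` obtained from a graph on `V` by adding `p` new vertices
`â^1, …, â^p` (`ahat i`) and, for each of them, `q` new middle vertices `a^i_j` (`mid i j`). -/
inductive ExtVert (V : Type*) (p q : ℕ) where
  | base (v : V)
  | ahat (i : Fin p)
  | mid (i : Fin p) (j : Fin q)

/-- Base adjacency of `G'`: the edges of `G`, together with the paths
`â^i — a^i_j — v₁` of length two. -/
def extRel {V : Type*} (G : SimpleGraph V) (v1 : V) {p q : ℕ} :
    ExtVert V p q → ExtVert V p q → Prop
  | .base v, .base w => G.Adj v w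
  | .ahat i, .mid i' _ => i = i'
  | .mid _ _, .base v => v = v1
  | _, _ => False

/-- The graph `G'` obtained from `G` by adding, for each new vertex `â^i`, `q` internally
disjoint paths `â^i a^i_j v₁` of length two through new pairwise distinct vertices. -/
def extGraph {V : Type*} (G : SimpleGraph V) (v1 : V) (p q : ℕ) :
    SimpleGraph (ExtVert V p q) :=
  SimpleGraph.fromRel (extRel G v1)

/-- The set `S' = {v₁, v₂, v₃, v₄, â^1, …, â^p}` inside `G'`. -/
def extS {V : Type*} (v1 v2 v3 v4 : V) (p q : ℕ) : Set (ExtVert V p q) :=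
  (ExtVert.base '' {v1, v2, v3, v4}) ∪ Set.range ExtVert.ahat

/-!
For each `j`, enlarge the `j`-th tree `T_j` by the paths `â^i a^i_j v₁` for all `i`. Each `â^i` is
a leaf of the result and each `a^i_j` has, besides `â^i`, only the neighbour `v₁`, so a cycle can
meet neither and lies in the copy of `T_j`: the result is again a tree. Two of the enlarged trees
meet in `S` and the vertices `â^i` only, because their middle vertices `a^i_j` carry different
indices `j`; for the same reason the only edges they could share are edges of `G`.
-/

namespace SimpleGraph

variable {W W' : Type*} {G : SimpleGraph W} {G' : SimpleGraph W'}

lemma Walk.IsCycle.exists_adj_ne_of_mem_support {u v : W} {c : G.Walk u u} (hc : c.IsCycle)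
    (hv : v ∈ c.support) :
    ∃ y z, y ≠ z ∧ G.Adj v y ∧ G.Adj v z ∧ y ∈ c.support ∧ z ∈ c.support := by
  obtain ⟨y, z, hyz, hN⟩ := Set.ncard_eq_two.mp (hc.ncard_neighborSet_toSubgraph_eq_two hv)
  have hy : c.toSubgraph.Adj v y := by simp [← Subgraph.mem_neighborSet, hN]
  have hz : c.toSubgraph.Adj v z := by simp [← Subgraph.mem_neighborSet, hN]
  exact ⟨y, z, hyz, hy.adj_sub, hz.adj_sub, Walk.mem_support_of_adj_toSubgraph hy.symm,
    Walk.mem_support_of_adj_toSubgraph hz.symm⟩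

lemma Embedding.exists_notMem_range_of_isCycle (f : G ↪g G') (hG : G.IsAcyclic) {u : W'}
    {c : G'.Walk u u} (hc : c.IsCycle) : ∃ w ∈ c.support, w ∉ Set.range f := by
  by_contra! h
  have hind : (G'.induce (Set.range f)).IsAcyclic := f.isoInduceRange.isAcyclic_iff.mp hG
  exact hind (c.induce _ h) (Walk.IsCycle.of_map (f := (Embedding.induce _).toHom)
    (by rwa [Walk.map_induce]))

end SimpleGraph

namespace ExtVert

variable {V : Type*} {G : SimpleGraph V} {v1 : V} {p q : ℕ}

@[simp] lemma extGraph_adj {x y : ExtVert V p q} :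
    (extGraph G v1 p q).Adj x y ↔ x ≠ y ∧ (extRel G v1 x y ∨ extRel G v1 y x) :=
  fromRel_adj _ _ _

variable (G v1 p q) in
def baseEmbedding : G ↪g extGraph G v1 p q where
  toFun := base
  inj' _ _ h := by cases h; rfl
  map_rel_iff' {a b} := by
    change (extGraph G v1 p q).Adj (base a) (base b) ↔ G.Adj a b
    simpa [extRel, G.adj_comm b a] using Adj.ne

@[simp] lemma baseEmbedding_apply (a : V) : baseEmbedding G v1 p q a = base a := rfl

/-- The enlarged tree for `A = T_j`: inducing on `{v₁} ∪ {â^i} ∪ {a^i_j}` adds exactly the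
edges `â^i a^i_j` and `a^i_j v₁`. -/
def extTree (v1 : V) (p : ℕ) (A : G.Subgraph) (j : Fin q) : (extGraph G v1 p q).Subgraph :=
  A.map (baseEmbedding G v1 p q).toHom ⊔
    (⊤ : (extGraph G v1 p q).Subgraph).induce
      (insert (base v1) (Set.range ahat ∪ Set.range (mid · j)))

variable {A B : G.Subgraph} {j j' : Fin q}

@[simp] lemma extTree_adj_base_base {a b : V} :
    (extTree v1 p A j).Adj (base a) (base b) ↔ A.Adj a b := by
  simp +contextual [extTree, Relation.map_apply, extRel]

@[simp] lemma extTree_adj_ahat {i : Fin p} {y : ExtVert V p q} :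
    (extTree v1 p A j).Adj (ahat i) y ↔ y = mid i j := by
  cases y <;> simp [extTree, Relation.map_apply, extRel, eq_comm, and_comm]

@[simp] lemma extTree_adj_mid {i : Fin p} {y : ExtVert V p q} :
    (extTree v1 p A j).Adj (mid i j') y ↔ j' = j ∧ (y = ahat i ∨ y = base v1) := by
  cases y <;> simp [extTree, Relation.map_apply, extRel, eq_comm, and_comm]

@[simp] lemma base_mem_extTree {a : V} :
    base a ∈ (extTree v1 p A j).verts ↔ a ∈ A.verts ∨ a = v1 := by
  simp [extTree, or_comm]

lemma mem_of_base_mem_extTree (hv1 : v1 ∈ A.verts) {a : V}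
    (h : base a ∈ (extTree v1 p A j).verts) : a ∈ A.verts :=
  (base_mem_extTree.1 h).elim id (· ▸ hv1)

@[simp] lemma ahat_mem_extTree {i : Fin p} : ahat i ∈ (extTree v1 p A j).verts := by
  simp [extTree]

@[simp] lemma mid_mem_extTree {i : Fin p} : mid i j' ∈ (extTree v1 p A j).verts ↔ j' = j := by
  simp [extTree, eq_comm]

variable (v1 p A j) in
def coeEmbeddingExtTree : A.coe ↪g (extTree v1 p A j).coe where
  toFun a := ⟨base a, base_mem_extTree.2 (.inl a.2)⟩
  inj' a b h := Subtype.ext (by simpa using h)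
  map_rel_iff' := extTree_adj_base_base

lemma connected_coe_extTree (hA : A.coe.Connected) (hv1 : v1 ∈ A.verts) :
    (extTree v1 p A j).coe.Connected := by
  let c : (extTree v1 p A j).verts := ⟨base v1, by simp⟩
  refine (connected_iff_exists_forall_reachable _).2 ⟨c, fun ⟨x, hx⟩ => ?_⟩
  cases x with
  | base a =>
    exact (hA.preconnected ⟨v1, hv1⟩ ⟨a, mem_of_base_mem_extTree hv1 hx⟩).map
      (coeEmbeddingExtTree v1 p A j).toHom
  | ahat i =>
    have h1 : (extTree v1 p A j).coe.Adj c ⟨mid i j, by simp⟩ := .symm (by simp [c])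
    have h2 : (extTree v1 p A j).coe.Adj ⟨mid i j, by simp⟩ ⟨ahat i, hx⟩ := .symm (by simp)
    exact h1.reachable.trans h2.reachable
  | mid i j' =>
    obtain rfl : j' = j := mid_mem_extTree.1 hx
    exact Adj.reachable (.symm (by simp [c]))

lemma isAcyclic_coe_extTree (hA : A.coe.IsAcyclic) (hv1 : v1 ∈ A.verts) :
    (extTree v1 p A j).coe.IsAcyclic := by
  intro u c hc
  have ahat_notMem (i : Fin p) (hi) : ⟨ahat i, hi⟩ ∉ c.support := by
    intro hmem
    obtain ⟨y, z, hyz, hy, hz, -, -⟩ := hc.exists_adj_ne_of_mem_support hmem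
    simp only [Subgraph.coe_adj, extTree_adj_ahat] at hy hz
    exact hyz (Subtype.ext (hy.trans hz.symm))
  obtain ⟨⟨w, hw⟩, hwc, hwr⟩ :=
    (coeEmbeddingExtTree v1 p A j).exists_notMem_range_of_isCycle hA hc
  cases w with
  | base a => exact hwr ⟨⟨a, mem_of_base_mem_extTree hv1 hw⟩, rfl⟩
  | ahat i => exact ahat_notMem i hw hwc
  | mid i j' =>
    obtain ⟨⟨y, hy'⟩, ⟨z, hz'⟩, hyz, hy, hz, hyc, hzc⟩ :=
      hc.exists_adj_ne_of_mem_support hwc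
    simp only [Subgraph.coe_adj, extTree_adj_mid] at hy hz
    obtain ⟨-, rfl | rfl⟩ := hy
    · exact ahat_notMem i hy' hyc
    obtain ⟨-, rfl | rfl⟩ := hz
    · exact ahat_notMem i hz' hzc
    · exact hyz rfl

lemma image_base_union_range_ahat_subset_extTree_verts {s : Set V} (hs : s ⊆ A.verts) :
    base '' s ∪ Set.range ahat ⊆ (extTree v1 p A j).verts := by
  rintro _ (⟨a, ha, rfl⟩ | ⟨i, rfl⟩)
  · simp [hs ha]
  · simp

lemma extTree_verts_inter (hA : v1 ∈ A.verts) (hB : v1 ∈ B.verts) (hj : j ≠ j') :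
    (extTree v1 p A j).verts ∩ (extTree v1 p B j').verts =
      base '' (A.verts ∩ B.verts) ∪ Set.range ahat := by
  ext x
  cases x with
  | base a => simp only [Set.mem_inter_iff, base_mem_extTree]; aesop
  | ahat i => simp
  | mid i k => simpa using fun h : k = j => h ▸ hj

lemma disjoint_edgeSet_extTree (hAB : Disjoint A.edgeSet B.edgeSet) (hj : j ≠ j') :
    Disjoint (extTree v1 p A j).edgeSet (extTree v1 p B j').edgeSet := by
  rw [Set.disjoint_left]
  refine Sym2.ind fun x y hxyA hxyB => ?_
  simp only [Subgraph.mem_edgeSet] at hxyA hxyB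
  have base_of_adj (x y) (hA : (extTree v1 p A j).Adj x y)
      (hB : (extTree v1 p B j').Adj x y) : ∃ a, x = base a := by
    cases x with
    | base a => exact ⟨a, rfl⟩
    | ahat i => exact (hj (by simp_all)).elim
    | mid i k => exact (hj (by simp_all)).elim
  obtain ⟨a, rfl⟩ := base_of_adj x y hxyA hxyB
  obtain ⟨b, rfl⟩ := base_of_adj y (base a) hxyA.symm hxyB.symm
  exact Set.disjoint_left.mp hAB (Subgraph.mem_edgeSet.2 (extTree_adj_base_base.1 hxyA))
    (Subgraph.mem_edgeSet.2 (extTree_adj_base_base.1 hxyB))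

end ExtVert

theorem ext_trees_of_trees_general {V : Type*} (G : SimpleGraph V) (v1 v2 v3 v4 : V)
    (k1 k2 : ℕ)
    (F : Fin k2 → G.Subgraph) (hF : IsIDTrees G ({v1, v2, v3, v4} : Set V) F) :
    ∃ F' : Fin k2 → (extGraph G v1 (k1 - 4) k2).Subgraph,
      IsIDTrees (extGraph G v1 (k1 - 4) k2) (extS v1 v2 v3 v4 (k1 - 4) k2) F' := by
  obtain ⟨hTrees, hPairs⟩ := hF
  have hv1 (j) : v1 ∈ (F j).verts := (hTrees j).1 (by simp)
  refine ⟨fun j => ExtVert.extTree v1 (k1 - 4) (F j) j, fun j => ⟨?_, ⟨?_, ?_⟩⟩,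
    fun j j' hjj' => ⟨?_, ?_⟩⟩
  · exact ExtVert.image_base_union_range_ahat_subset_extTree_verts (hTrees j).1
  · exact ExtVert.connected_coe_extTree (hTrees j).2.connected (hv1 j)
  · exact ExtVert.isAcyclic_coe_extTree (hTrees j).2.isAcyclic (hv1 j)
  · rw [ExtVert.extTree_verts_inter (hv1 j) (hv1 j') hjj', (hPairs j j' hjj').1]
    rfl
  · exact ExtVert.disjoint_edgeSet_extTree (hPairs j j' hjj').2 hjj'

/-- If `G` contains `k₂` internally disjoint trees connecting `S = {v₁,v₂,v₃,v₄}`,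
then `G'` contains `k₂` internally disjoint trees connecting
`S' = S ∪ {â^1, …, â^{k₁-4}}`. -/
theorem ext_trees_of_trees {V : Type*} (G : SimpleGraph V) (v1 v2 v3 v4 : V)
    (h12 : v1 ≠ v2) (h13 : v1 ≠ v3) (h14 : v1 ≠ v4)
    (h23 : v2 ≠ v3) (h24 : v2 ≠ v4) (h34 : v3 ≠ v4)
    (k1 k2 : ℕ) (hk1 : 5 ≤ k1) (hk2 : 2 ≤ k2)
    (F : Fin k2 → G.Subgraph) (hF : IsIDTrees G ({v1, v2, v3, v4} : Set V) F) :
    ∃ F' : Fin k2 → (extGraph G v1 (k1 - 4) k2).Subgraph,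
      IsIDTrees (extGraph G v1 (k1 - 4) k2) (extS v1 v2 v3 v4 (k1 - 4) k2) F' :=
  ext_trees_of_trees_general G v1 v2 v3 v4 k1 k2 F hF
end

section
/- Let φ = c_1 ∧ … ∧ c_m be a 3-CNF formula over variables x_1, …, x_n (each clause c_j a set of three literals), with n ≥ 1 and m ≥ 1, and let G_φ and S be as follows: V(G_φ) = {x̂_i} ∪ {x_i} ∪ {x̄_i} (1 ≤ i ≤ n) ∪ {c_j : 1 ≤ j ≤ m} ∪ {a}; edges: x̂_i x_i, x̂_i x̄_i; x_i c_j when literal x_i ∈ c_j and x̄_i c_j when literal x̄_i ∈ c_j; x_1 and x̄_1 each adjacent to all x_i and x̄_i for 2 ≤ i ≤ n; and a adjacent to every x_i, every x̄_i and every c_j; S = {x̂_i : 1 ≤ i ≤ n} ∪ {c_j : 1 ≤ j ≤ m}. If G_φ contains two internally disjoint trees connecting S, then there exists a truth assignment of x_1,…,x_n under which every clause of φ contains a true literal. Specifically, if T_1 is a tree of the pair not containing the vertex a, then for each i the tree T_1 contains exactly one of x_i and x̄_i, and the assignment setting x_i to 1 exactly when x_i ∈ V(T_1) satisfies φ. 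-/
open SimpleGraph

/-- Vertices of the graph `G_φ` built from a 3-CNF formula with `n` variables and `m`
clauses: `xhat i` is `x̂_i`, `lit true i` is the literal `x_i`, `lit false i` is the
literal `x̄_i`, `clause j` is `c_j`, and `a` is the extra vertex. -/
inductive SatVert (n m : ℕ) where
  | xhat (i : Fin n)
  | lit (b : Bool) (i : Fin n)
  | clause (j : Fin m)
  | a

/-- Base adjacency of `G_φ`, where a clause `c j` is the set of its (at most three)
literals, a literal being a pair `(b, i)` standing for `x_i` if `b = true` and for
`x̄_i` if `b = false`. The vertices `x_1, x̄_1` (index `0`) are joined to all `x_i, x̄_i`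
with `i ≥ 2` (index `≠ 0`), and `a` is joined to all literal and clause vertices. -/
def satRel {n m : ℕ} (c : Fin m → Finset (Bool × Fin n)) :
    SatVert n m → SatVert n m → Prop
  | .xhat i, .lit _ i' => i = i'
  | .lit b i, .clause j => (b, i) ∈ c j
  | .lit _ i, .lit _ i' => i.val = 0 ∧ i'.val ≠ 0
  | .a, .lit _ _ => True
  | .a, .clause _ => True
  | _, _ => False

/-- The graph `G_φ` of the 3-SAT reduction. -/
def satGraph {n m : ℕ} (c : Fin m → Finset (Bool × Fin n)) : SimpleGraph (SatVert n m) :=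
  SimpleGraph.fromRel (satRel c)

/-- The set `S = {x̂_i : 1 ≤ i ≤ n} ∪ {c_j : 1 ≤ j ≤ m}`. -/
def satS (n m : ℕ) : Set (SatVert n m) :=
  Set.range SatVert.xhat ∪ Set.range SatVert.clause

/-!
Let `T` be one of the two trees that avoids `a` (they cannot both contain it, as `a ∉ S`).
Every tree reaches `x̂_i` from a clause vertex, and the only neighbours of `x̂_i` are `x_i` and
`x̄_i`, so each tree contains a literal vertex of every variable; since literal vertices lie
outside `S`, no tree can contain both `x_i` and `x̄_i`, for then the other tree would contain
neither. In `T` each clause vertex `c_j` needs a neighbour other than `a`, i.e. a literal of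
`c_j`, and that literal is true under the assignment read off `T`.
-/

lemma SimpleGraph.Subgraph.exists_adj_of_preconnected {V : Type*} {G : SimpleGraph V}
    {H : G.Subgraph} (hH : H.coe.Preconnected) {v w : V} (hv : v ∈ H.verts)
    (hw : w ∈ H.verts) (hvw : v ≠ w) : ∃ u, H.Adj v u := by
  obtain ⟨⟨u, _⟩, hu⟩ :=
    (hH ⟨v, hv⟩ ⟨w, hw⟩).nonempty_neighborSet_left (by simpa using hvw)
  exact ⟨u, hu⟩

namespace IsIDTrees

variable {V ι : Type*} {G : SimpleGraph V} {S : Set V} {F : ι → G.Subgraph}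

lemma notMem_of_mem (hF : IsIDTrees G S F) {i j : ι} (hij : i ≠ j) {v : V} (hvS : v ∉ S)
    (hv : v ∈ (F i).verts) : v ∉ (F j).verts :=
  fun hv' ↦ hvS <| (hF.2 i j hij).1 ▸ ⟨hv, hv'⟩

lemma notMem_or_notMem (hF : IsIDTrees G S F) {i j : ι} (hij : i ≠ j) {v : V} (hvS : v ∉ S) :
    v ∉ (F i).verts ∨ v ∉ (F j).verts := by
  by_cases hv : v ∈ (F i).verts
  · exact Or.inr (hF.notMem_of_mem hij hvS hv)
  · exact Or.inl hv

end IsIDTrees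

section SatGraph

variable {n m : ℕ} {c : Fin m → Finset (Bool × Fin n)}

lemma satGraph_adj_xhat {i : Fin n} {u : SatVert n m} (h : (satGraph c).Adj (.xhat i) u) :
    ∃ b, u = .lit b i := by
  rw [satGraph, fromRel_adj] at h
  obtain ⟨-, h | h⟩ := h <;> cases u <;> simp_all [satRel]

lemma satGraph_adj_clause {j : Fin m} {u : SatVert n m} (h : (satGraph c).Adj (.clause j) u) :
    u = .a ∨ ∃ l ∈ c j, u = .lit l.1 l.2 := by
  rw [satGraph, fromRel_adj] at h
  obtain ⟨-, h | h⟩ := h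
  · cases u <;> simp_all [satRel]
  · cases u with
    | lit b i => cases b <;> simp_all [satRel]
    | _ => simp_all [satRel]

lemma lit_notMem_satS (b : Bool) (i : Fin n) : SatVert.lit b i ∉ satS n m := by
  rintro (⟨_, h⟩ | ⟨_, h⟩) <;> cases h

lemma a_notMem_satS : (SatVert.a : SatVert n m) ∉ satS n m := by
  rintro (⟨_, h⟩ | ⟨_, h⟩) <;> cases h

variable {H : (satGraph c).Subgraph}

lemma exists_lit_mem_of_preconnected (hm : 1 ≤ m) (hS : satS n m ⊆ H.verts)
    (hH : H.coe.Preconnected) (i : Fin n) : ∃ b, SatVert.lit b i ∈ H.verts := by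
  obtain ⟨u, hu⟩ := Subgraph.exists_adj_of_preconnected hH (hS (.inl ⟨i, rfl⟩))
    (hS (.inr ⟨⟨0, hm⟩, rfl⟩)) nofun
  obtain ⟨b, rfl⟩ := satGraph_adj_xhat hu.adj_sub
  exact ⟨b, hu.snd_mem⟩

lemma exists_mem_clause_lit_mem_of_preconnected (hn : 1 ≤ n) (hS : satS n m ⊆ H.verts)
    (hH : H.coe.Preconnected) (ha : SatVert.a ∉ H.verts) (j : Fin m) :
    ∃ l ∈ c j, SatVert.lit l.1 l.2 ∈ H.verts := by
  obtain ⟨u, hu⟩ := Subgraph.exists_adj_of_preconnected hH (hS (.inr ⟨j, rfl⟩))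
    (hS (.inl ⟨⟨0, hn⟩, rfl⟩)) nofun
  rcases satGraph_adj_clause hu.adj_sub with rfl | ⟨l, hl, rfl⟩
  · exact absurd hu.snd_mem ha
  · exact ⟨l, hl, hu.snd_mem⟩

lemma IsIDTrees.lit_true_mem_iff {ι : Type*} [Nontrivial ι] {F : ι → (satGraph c).Subgraph}
    (hm : 1 ≤ m) (hF : IsIDTrees (satGraph c) (satS n m) F) (k : ι) (v : Fin n) :
    SatVert.lit true v ∈ (F k).verts ↔ SatVert.lit false v ∉ (F k).verts := by
  obtain ⟨k', hk'⟩ := exists_ne k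
  have hboth : ¬(SatVert.lit true v ∈ (F k).verts ∧ SatVert.lit false v ∈ (F k).verts) := by
    rintro ⟨htrue, hfalse⟩
    obtain ⟨b, hb⟩ := exists_lit_mem_of_preconnected hm (hF.1 k').1 (hF.1 k').2.1.preconnected v
    cases b
    · exact hF.notMem_of_mem hk'.symm (lit_notMem_satS _ _) hfalse hb
    · exact hF.notMem_of_mem hk'.symm (lit_notMem_satS _ _) htrue hb
  obtain ⟨b, hb⟩ := exists_lit_mem_of_preconnected hm (hF.1 k).1 (hF.1 k).2.1.preconnected v
  cases b <;> tauto

lemma IsIDTrees.exists_assignment_of_a_notMem {ι : Type*} [Nontrivial ι]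
    {F : ι → (satGraph c).Subgraph} (hn : 1 ≤ n) (hm : 1 ≤ m)
    (hF : IsIDTrees (satGraph c) (satS n m) F) {k : ι} (ha : SatVert.a ∉ (F k).verts) :
    ∃ t : Fin n → Bool, (∀ v, t v = true ↔ SatVert.lit true v ∈ (F k).verts) ∧
      ∀ j, ∃ l ∈ c j, t l.2 = l.1 := by
  classical
  refine ⟨fun v ↦ decide (SatVert.lit true v ∈ (F k).verts), fun v ↦ decide_eq_true_iff,
    fun j ↦ ?_⟩
  obtain ⟨⟨b, v⟩, hl, hmem⟩ :=
    exists_mem_clause_lit_mem_of_preconnected hn (hF.1 k).1 (hF.1 k).2.1.preconnected ha j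
  refine ⟨_, hl, ?_⟩
  cases b
  · simpa using (hF.lit_true_mem_iff hm k v).not_left.mpr hmem
  · simpa using hmem

end SatGraph

theorem sat_satisfiable_of_trees_general (n m : ℕ) (hn : 1 ≤ n) (hm : 1 ≤ m)
    (c : Fin m → Finset (Bool × Fin n))
    (F : Fin 2 → (satGraph c).Subgraph)
    (hF : IsIDTrees (satGraph c) (satS n m) F) :
    (∃ t : Fin n → Bool, ∀ j, ∃ l ∈ c j, t l.2 = l.1) ∧
      ∀ i : Fin 2, SatVert.a ∉ (F i).verts →
        (∀ v : Fin n, (SatVert.lit true v ∈ (F i).verts ↔ SatVert.lit false v ∉ (F i).verts)) ∧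
        ∃ t : Fin n → Bool,
          (∀ v : Fin n, t v = true ↔ SatVert.lit true v ∈ (F i).verts) ∧
          ∀ j, ∃ l ∈ c j, t l.2 = l.1 := by
  have hassign k (ha : SatVert.a ∉ (F k).verts) := hF.exists_assignment_of_a_notMem hn hm ha
  refine ⟨?_, fun k ha ↦ ⟨hF.lit_true_mem_iff hm k, hassign k ha⟩⟩
  rcases hF.notMem_or_notMem zero_ne_one a_notMem_satS with ha | ha <;>
  · obtain ⟨t, -, ht⟩ := hassign _ ha
    exact ⟨t, ht⟩

/-- If `G_φ` contains two internally disjoint trees connecting `S`, then `φ` is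
satisfiable.  Specifically, for any tree `F i` of the pair not containing the vertex `a`,
`F i` contains exactly one of `x_v`, `x̄_v` for each variable `v`, and the assignment
setting `x_v` to `true` exactly when the vertex `x_v` belongs to `F i` satisfies `φ`. -/
theorem sat_satisfiable_of_trees (n m : ℕ) (hn : 1 ≤ n) (hm : 1 ≤ m)
    (c : Fin m → Finset (Bool × Fin n)) (hc : ∀ j, (c j).card = 3)
    (F : Fin 2 → (satGraph c).Subgraph)
    (hF : IsIDTrees (satGraph c) (satS n m) F) :
    (∃ t : Fin n → Bool, ∀ j, ∃ l ∈ c j, t l.2 = l.1) ∧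
      ∀ i : Fin 2, SatVert.a ∉ (F i).verts →
        (∀ v : Fin n, (SatVert.lit true v ∈ (F i).verts ↔ SatVert.lit false v ∉ (F i).verts)) ∧
        ∃ t : Fin n → Bool,
          (∀ v : Fin n, t v = true ↔ SatVert.lit true v ∈ (F i).verts) ∧
          ∀ j, ∃ l ∈ c j, t l.2 = l.1 :=
  sat_satisfiable_of_trees_general n m hn hm c F hF
end
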